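/- arXiv:1012.0979 — 3 statements merged into one kernel-verified Lean document; each statement's English description precedes it below -/
import Mathlib

section
/- Let n ≥ 2, let a_1,...,a_n ∈ {1/3, 2/3}, and let d_1,...,d_n be integers with d_i ≤ -2 satisfy the linear chain equations a_{i-1} + a_i d_i + a_{i+1} = 2 + d_i for all i (with a_0 = a_{n+1} = 0). If a_i = 1/3 for some i with 2 ≤ i ≤ n-1, then a_j = 1/3 for all j = 1,...,n, and this leads to a contradiction (no integer solution for d_1 exists). Hence a_i = 2/3 for all interior indices 2 ≤ i ≤ n-1. -/
/-- For a linear chain with coefficients in `{1/3, 2/3}` satisfying the discrepancy equations,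
an interior coefficient `1/3` would force all coefficients to be `1/3` and lead to a
contradiction; hence all interior coefficients equal `2/3`. -/
theorem stmt2 (n : ℕ) (hn : 2 ≤ n) (a : ℕ → ℚ) (d : ℕ → ℤ)
    (ha0 : a 0 = 0) (han : a (n + 1) = 0)
    (hmem : ∀ i, 1 ≤ i → i ≤ n → a i = 1/3 ∨ a i = 2/3)
    (hd : ∀ i, 1 ≤ i → i ≤ n → d i ≤ -2)
    (heq : ∀ i, 1 ≤ i → i ≤ n →
      a (i - 1) + a i * (d i : ℚ) + a (i + 1) = 2 + (d i : ℚ)) :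
    ((∃ i, 2 ≤ i ∧ i ≤ n - 1 ∧ a i = 1/3) → False) ∧
    (∀ i, 2 ≤ i → i ≤ n - 1 → a i = 2/3) := by
  have step : ∀ j, 2 ≤ j → j ≤ n - 1 → a j = 1/3 → a (j - 1) = 1/3 := by
    intro j h2 hle h13
    have hj1 : 1 ≤ j := by omega
    have hjn : j ≤ n := by omega
    have e := heq j hj1 hjn
    have hdj : (d j : ℚ) ≤ -2 := by exact_mod_cast hd j hj1 hjn
    have hm1 : a (j - 1) = 1/3 ∨ a (j - 1) = 2/3 := hmem (j - 1) (by omega) (by omega)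
    have hp1 : a (j + 1) = 1/3 ∨ a (j + 1) = 2/3 := hmem (j + 1) (by omega) (by omega)
    rcases hm1 with h | h
    · exact h
    · exfalso
      rcases hp1 with h' | h' <;> rw [h13, h, h'] at e <;> linarith
  have down : ∀ j, 2 ≤ j → j ≤ n - 1 → a j = 1/3 → a 1 = 1/3 ∧ a 2 = 1/3 := by
    intro j
    induction j using Nat.strong_induction_on with
    | _ j IH =>
      intro h2 hle h13
      rcases eq_or_lt_of_le h2 with rfl | hlt
      · refine ⟨?_, h13⟩
        have := step 2 (le_refl 2) hle h13
        simpa using this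
      · have hprev := step j (by omega) hle h13
        exact IH (j - 1) (by omega) (by omega) (by omega) hprev
  have part1 : (∃ i, 2 ≤ i ∧ i ≤ n - 1 ∧ a i = 1/3) → False := by
    rintro ⟨i, h2, hle, h13⟩
    obtain ⟨h1, h2'⟩ := down i h2 hle h13
    have e' : a 1 * (d 1 : ℚ) + a 2 = 2 + (d 1 : ℚ) := by
      have := heq 1 (le_refl 1) (by omega)
      rw [show (1 : ℕ) - 1 = 0 from rfl, ha0] at this
      linarith [this]
    rw [h1, h2'] at e'
    have hq : (2 : ℚ) * (d 1 : ℤ) = -5 := by linarith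
    have hz : (2 : ℤ) * d 1 = -5 := by exact_mod_cast hq
    omega
  refine ⟨part1, ?_⟩
  intro i h2 hle
  rcases hmem i (by omega) (by omega) with h | h
  · exact absurd ⟨i, h2, hle, h⟩ part1
  · exact h
end

section
/- Consider a fork graph with central vertex 3 adjacent to vertices 1, 2, 4, where vertex 4 may start a further chain. Let a_j ∈ {1/3, 2/3} be coefficients and d_j ≤ -2 integer weights satisfying, for each vertex i, Σ_{j adjacent to i} a_j + a_i d_i = 2 + d_i. If d_3 ≤ -3, then necessarily a_1 = a_2 = a_4 = 1/3, a_3 = 2/3, d_3 = -3, and each of the vertices 1, 2, 4 is an endpoint of the graph (has no further neighbors) with d_1 = d_2 = d_4 = -2; in particular the graph has exactly 4 vertices. -/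
open Finset

/-!
At the central vertex the equation reads `a₁ + a₂ + a₄ = 2 + (1 - a₃) d₃`. Since the left side is
at least `1` and `d₃ ≤ -3`, this forces `a₃ = 2/3`, `d₃ = -3` and `a₁ = a₂ = a₄ = 1/3`. At a branch
vertex `v` the equation then says that the coefficients of the neighbours of `v` other than the
centre sum to `4/3 + (2/3) d_v ≤ 0`; as all coefficients are positive, `v` is a leaf and `d_v = -2`.
A connected graph in which all neighbours of one vertex are leaves is a star.
-/

namespace SimpleGraph

variable {V : Type*} {G : SimpleGraph V}

theorem Connected.eq_or_adj_of_forall_adj_adj (hconn : G.Connected) {v : V}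
    (hleaf : ∀ w x, G.Adj v w → G.Adj w x → x = v) (u : V) : u = v ∨ G.Adj v u := by
  by_contra hu
  obtain ⟨p⟩ := hconn v u
  obtain ⟨e, -, he, he'⟩ := p.exists_boundary_dart {x | x = v ∨ G.Adj v x} (Or.inl rfl) hu
  rcases he with h | h
  · exact he' (Or.inr (h ▸ e.adj))
  · exact he' (Or.inl (hleaf _ _ h e.adj))

theorem Connected.card_eq_degree_add_one [Fintype V] [DecidableEq V] [DecidableRel G.Adj]
    (hconn : G.Connected) {v : V} (hleaf : ∀ w ∈ G.neighborFinset v, G.neighborFinset w = {v}) :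
    Fintype.card V = G.degree v + 1 := by
  have huniv : (univ : Finset V) = insert v (G.neighborFinset v) := by
    refine (eq_univ_of_forall fun u => ?_).symm
    refine mem_insert.2 (hconn.eq_or_adj_of_forall_adj_adj (fun w x hw hx => ?_) u |>.imp id ?_)
    · simpa [hleaf w ((G.mem_neighborFinset v w).2 hw)] using (G.mem_neighborFinset w x).2 hx
    · exact (G.mem_neighborFinset v u).2
  rw [← card_univ, huniv, card_insert_of_notMem (by simp), card_neighborFinset_eq_degree]

theorem neighborFinset_eq_singleton_of_adj_of_coeff [Fintype V] [DecidableEq V]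
    [DecidableRel G.Adj] {a : V → ℚ} {d : V → ℤ} (hpos : ∀ j, 0 < a j) {v w : V}
    (heq : (∑ j ∈ G.neighborFinset v, a j) + a v * (d v : ℚ) = 2 + (d v : ℚ))
    (hadj : G.Adj v w) (hav : a v = 1/3) (haw : a w = 2/3) (hd : d v ≤ -2) :
    G.neighborFinset v = {w} ∧ d v = -2 := by
  have hsplit := add_sum_erase (G.neighborFinset v) a ((G.mem_neighborFinset v w).2 hadj)
  rw [haw] at hsplit
  rw [hav] at heq
  have hrest_nonneg : 0 ≤ ∑ j ∈ (G.neighborFinset v).erase w, a j :=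
    sum_nonneg fun j _ => (hpos j).le
  have hdQ : (d v : ℚ) ≤ -2 := by exact_mod_cast hd
  have hrest : ∑ j ∈ (G.neighborFinset v).erase w, a j = 0 := by linarith
  have hdv : (d v : ℚ) = -2 := by linarith
  have hempty : (G.neighborFinset v).erase w = ∅ := by
    by_contra hne
    exact (sum_pos (fun j _ => hpos j) (nonempty_iff_ne_empty.2 hne)).ne' hrest
  refine ⟨((erase_eq_empty_iff _ _).1 hempty).resolve_left ?_, by exact_mod_cast hdv⟩
  exact ne_empty_of_mem ((G.mem_neighborFinset v w).2 hadj)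

end SimpleGraph

theorem fork_center_coeffs {a₁ a₂ a₄ a₃ : ℚ} {d : ℤ} (h₁ : a₁ = 1/3 ∨ a₁ = 2/3)
    (h₂ : a₂ = 1/3 ∨ a₂ = 2/3) (h₄ : a₄ = 1/3 ∨ a₄ = 2/3) (h₃ : a₃ = 1/3 ∨ a₃ = 2/3)
    (hd : d ≤ -3) (h : a₁ + (a₂ + a₄) + a₃ * (d : ℚ) = 2 + (d : ℚ)) :
    a₁ = 1/3 ∧ a₂ = 1/3 ∧ a₄ = 1/3 ∧ a₃ = 2/3 ∧ d = -3 := by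
  have hdQ : (d : ℚ) ≤ -3 := by exact_mod_cast hd
  rcases h₁ with rfl | rfl <;> rcases h₂ with rfl | rfl <;> rcases h₄ with rfl | rfl <;>
    rcases h₃ with rfl | rfl <;> norm_num <;>
    first | linarith | exact_mod_cast (by linarith : (d : ℚ) = -3)

/-- Fork case with central vertex `v3` of weight `d v3 ≤ -3` in the (connected) dual graph of
the exceptional divisor: necessarily `a v1 = a v2 = a v4 = 1/3`, `a v3 = 2/3`, `d v3 = -3`,
the vertices `v1, v2, v4` are endpoints with weight `-2`, and the graph has exactly 4 vertices. -/
theorem stmt4 {V : Type*} [Fintype V] [DecidableEq V]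
    (G : SimpleGraph V) [DecidableRel G.Adj] (hconn : G.Connected)
    (a : V → ℚ) (d : V → ℤ)
    (v1 v2 v3 v4 : V)
    (hdist : v1 ≠ v2 ∧ v1 ≠ v3 ∧ v1 ≠ v4 ∧ v2 ≠ v3 ∧ v2 ≠ v4 ∧ v3 ≠ v4)
    (hnbr : G.neighborFinset v3 = {v1, v2, v4})
    (hmem : ∀ i, a i = 1/3 ∨ a i = 2/3)
    (hd : ∀ i, d i ≤ -2)
    (heq : ∀ i, (∑ j ∈ G.neighborFinset i, a j) + a i * (d i : ℚ) = 2 + (d i : ℚ))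
    (hd3 : d v3 ≤ -3) :
    a v1 = 1/3 ∧ a v2 = 1/3 ∧ a v4 = 1/3 ∧ a v3 = 2/3 ∧ d v3 = -3 ∧
    G.neighborFinset v1 = {v3} ∧ G.neighborFinset v2 = {v3} ∧ G.neighborFinset v4 = {v3} ∧
    d v1 = -2 ∧ d v2 = -2 ∧ d v4 = -2 ∧
    Fintype.card V = 4 := by
  obtain ⟨h12, -, h14, -, h24, -⟩ := hdist
  have h3 := heq v3
  rw [hnbr, sum_insert (by simp [h12, h14]), sum_insert (by simp [h24]), sum_singleton] at h3
  obtain ⟨ha1, ha2, ha4, ha3, hd3'⟩ :=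
    fork_center_coeffs (hmem v1) (hmem v2) (hmem v4) (hmem v3) hd3 h3
  have hpos : ∀ i, 0 < a i := fun i => by rcases hmem i with h | h <;> rw [h] <;> norm_num
  have hleaf : ∀ v ∈ G.neighborFinset v3, a v = 1/3 → G.neighborFinset v = {v3} ∧ d v = -2 :=
    fun v hv hav => G.neighborFinset_eq_singleton_of_adj_of_coeff hpos (heq v)
      ((G.mem_neighborFinset v3 v).1 hv).symm hav ha3 (hd v)
  obtain ⟨hn1, hd1⟩ := hleaf v1 (by simp [hnbr]) ha1
  obtain ⟨hn2, hd2⟩ := hleaf v2 (by simp [hnbr]) ha2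
  obtain ⟨hn4, hd4⟩ := hleaf v4 (by simp [hnbr]) ha4
  have hcard := hconn.card_eq_degree_add_one (v := v3) (by
    rw [hnbr]; simp only [mem_insert, mem_singleton]
    rintro w (rfl | rfl | rfl) <;> assumption)
  rw [← G.card_neighborFinset_eq_degree, hnbr, card_eq_three.2 ⟨v1, v2, v4, h12, h14, h24, rfl⟩]
    at hcard
  exact ⟨ha1, ha2, ha4, ha3, hd3', hn1, hn2, hn4, hd1, hd2, hd4, hcard⟩
end

section
/- Consider a fork graph with central vertex 3 with d_3 = -2, adjacent to vertices 1, 2, 4, with coefficients a_j ∈ {1/3, 2/3} and integer weights d_j ≤ -2 satisfying Σ_{j adjacent to i} a_j + a_i d_i = 2 + d_i for all i. Then a_3 = 2/3, and after relabeling, a_1 = a_2 = 1/3 and a_4 = 2/3; moreover vertices 1 and 2 are endpoints with d_1 = d_2 = -2. -/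
open Finset

/-- Fork case with central vertex `v3` of weight `-2`: then `a v3 = 2/3` and, after relabeling
the three branches, two of them carry coefficient `1/3` and are endpoints of weight `-2`,
while the third carries coefficient `2/3`. -/
theorem stmt5 {V : Type*} [Fintype V] [DecidableEq V]
    (G : SimpleGraph V) [DecidableRel G.Adj]
    (a : V → ℚ) (d : V → ℤ)
    (v1 v2 v3 v4 : V)
    (hdist : v1 ≠ v2 ∧ v1 ≠ v3 ∧ v1 ≠ v4 ∧ v2 ≠ v3 ∧ v2 ≠ v4 ∧ v3 ≠ v4)
    (hnbr : G.neighborFinset v3 = {v1, v2, v4})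
    (hmem : ∀ i, a i = 1/3 ∨ a i = 2/3)
    (hd : ∀ i, d i ≤ -2)
    (heq : ∀ i, (∑ j ∈ G.neighborFinset i, a j) + a i * (d i : ℚ) = 2 + (d i : ℚ))
    (hd3 : d v3 = -2) :
    a v3 = 2/3 ∧
    ∃ w1 w2 w4 : V, w1 ≠ w2 ∧ w1 ≠ w4 ∧ w2 ≠ w4 ∧
      ({w1, w2, w4} : Finset V) = {v1, v2, v4} ∧
      a w1 = 1/3 ∧ a w2 = 1/3 ∧ a w4 = 2/3 ∧
      G.neighborFinset w1 = {v3} ∧ G.neighborFinset w2 = {v3} ∧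
      d w1 = -2 ∧ d w2 = -2 := by
  obtain ⟨h12, h13, h14, h23, h24, h34⟩ := hdist
  -- sum at v3
  have hsum3 : a v1 + a v2 + a v4 = 2 * a v3 := by
    have := heq v3
    rw [hnbr, hd3] at this
    rw [Finset.sum_insert (by simp [h12, h14]), Finset.sum_insert (by simp [h24]),
      Finset.sum_singleton] at this
    push_cast at this
    linarith
  have ha3 : a v3 = 2/3 := by
    rcases hmem v3 with h3 | h3
    · rcases hmem v1 with h1 | h1 <;> rcases hmem v2 with h2 | h2 <;>
        rcases hmem v4 with h4 | h4 <;> rw [h1, h2, h4, h3] at hsum3 <;> norm_num at hsum3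
    · exact h3
  refine ⟨ha3, ?_⟩
  -- key lemma
  have key : ∀ w, w ∈ ({v1, v2, v4} : Finset V) → a w = 1/3 →
      G.neighborFinset w = {v3} ∧ d w = -2 := by
    intro w hw haw
    have hadj : G.Adj v3 w := by
      rw [← SimpleGraph.mem_neighborFinset, hnbr]; exact hw
    have hv3mem : v3 ∈ G.neighborFinset w := by
      rw [SimpleGraph.mem_neighborFinset]; exact hadj.symm
    have hsw : (∑ j ∈ G.neighborFinset w, a j) = 2 + (2/3) * (d w : ℚ) := by
      have := heq w
      rw [haw] at this
      linarith
    -- lower bound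
    have hbound : (2:ℚ)/3 + ((G.neighborFinset w).erase v3).card * (1/3) ≤
        ∑ j ∈ G.neighborFinset w, a j := by
      rw [← Finset.add_sum_erase _ a hv3mem, ha3]
      have : (((G.neighborFinset w).erase v3).card : ℚ) * (1/3) ≤
          ∑ j ∈ (G.neighborFinset w).erase v3, a j := by
        rw [Finset.card_eq_sum_ones, Nat.cast_sum]
        rw [Finset.sum_mul]
        apply Finset.sum_le_sum
        intro i _
        rcases hmem i with h | h <;> rw [h] <;> norm_num
      linarith
    have hdw : (d w : ℚ) ≤ -2 := by exact_mod_cast hd w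
    have hcard : (((G.neighborFinset w).erase v3).card : ℚ) ≤ 0 := by
      nlinarith
    have hcard0 : ((G.neighborFinset w).erase v3).card = 0 := by
      have h0 : (((G.neighborFinset w).erase v3).card : ℚ) = 0 :=
        le_antisymm hcard (by positivity)
      exact_mod_cast h0
    have herase : (G.neighborFinset w).erase v3 = ∅ := Finset.card_eq_zero.mp hcard0
    have hN : G.neighborFinset w = {v3} := by
      rcases (Finset.erase_eq_empty_iff _ _).mp herase with h | h
      · exact absurd (h ▸ hv3mem) (by simp)
      · exact h
    refine ⟨hN, ?_⟩
    rw [hN, Finset.sum_singleton, ha3] at hsw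
    have : (d w : ℚ) = -2 := by linarith
    exact_mod_cast this
  rw [ha3] at hsum3
  have m1 : v1 ∈ ({v1, v2, v4} : Finset V) := by simp
  have m2 : v2 ∈ ({v1, v2, v4} : Finset V) := by simp
  have m4 : v4 ∈ ({v1, v2, v4} : Finset V) := by simp
  rcases hmem v1 with h1 | h1 <;> rcases hmem v2 with h2 | h2 <;> rcases hmem v4 with h4 | h4
  · rw [h1, h2, h4] at hsum3; norm_num at hsum3
  · obtain ⟨n1, e1⟩ := key v1 m1 h1
    obtain ⟨n2, e2⟩ := key v2 m2 h2
    exact ⟨v1, v2, v4, h12, h14, h24, rfl, h1, h2, h4, n1, n2, e1, e2⟩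
  · obtain ⟨n1, e1⟩ := key v1 m1 h1
    obtain ⟨n4, e4⟩ := key v4 m4 h4
    refine ⟨v1, v4, v2, h14, h12, h24.symm, ?_, h1, h4, h2, n1, n4, e1, e4⟩
    ext x; simp; tauto
  · rw [h1, h2, h4] at hsum3; norm_num at hsum3
  · obtain ⟨n2, e2⟩ := key v2 m2 h2
    obtain ⟨n4, e4⟩ := key v4 m4 h4
    refine ⟨v2, v4, v1, h24, h12.symm, h14.symm, ?_, h2, h4, h1, n2, n4, e2, e4⟩
    ext x; simp; tauto
  · rw [h1, h2, h4] at hsum3; norm_num at hsum3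
  · rw [h1, h2, h4] at hsum3; norm_num at hsum3
  · rw [h1, h2, h4] at hsum3; norm_num at hsum3
end
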